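/- Let ζ_8 = e^{2πi/8} and let m, n be integers. The Kloosterman-type sum K = ζ_8^{3m+n} + ζ_8^{m+3n} + ζ_8^{7m+5n} + ζ_8^{5m+7n} is nonzero if and only if n ≡ m (mod 4). -/
import Mathlib


open Complex

/-- With ζ₈ = e^{2πi/8}, the sum
ζ₈^{3m+n} + ζ₈^{m+3n} + ζ₈^{7m+5n} + ζ₈^{5m+7n} is nonzero iff n ≡ m (mod 4). -/
theorem stmt_2 (m n : ℤ) :
    ((Complex.exp (2 * Real.pi * Complex.I / 8)) ^ (3 * m + n) +
     (Complex.exp (2 * Real.pi * Complex.I / 8)) ^ (m + 3 * n) +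
     (Complex.exp (2 * Real.pi * Complex.I / 8)) ^ (7 * m + 5 * n) +
     (Complex.exp (2 * Real.pi * Complex.I / 8)) ^ (5 * m + 7 * n) ≠ 0) ↔
    (4 : ℤ) ∣ (n - m) := by
  have hI : Complex.I ≠ 0 := Complex.I_ne_zero
  set ζ := Complex.exp (2 * Real.pi * Complex.I / 8) with hz
  have hζ0 : ζ ≠ 0 := Complex.exp_ne_zero _
  have h2 : ζ ^ (2:ℤ) = Complex.I := by
    rw [hz, ← Complex.exp_int_mul]
    have h : (2:ℤ) * (2 * (Real.pi:ℂ) * Complex.I / 8) = ((Real.pi/2 : ℝ):ℂ) * Complex.I := by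
      push_cast; ring
    rw [h, Complex.exp_mul_I]
    simp [Real.cos_pi_div_two, Real.sin_pi_div_two]
  have h8 : ζ ^ (8:ℤ) = 1 := by
    rw [hz, ← Complex.exp_int_mul]
    have h : (8:ℤ) * (2 * (Real.pi:ℂ) * Complex.I / 8) = 2 * (Real.pi:ℂ) * Complex.I := by
      push_cast; ring
    rw [h, Complex.exp_two_pi_mul_I]
  set k := n - m with hk
  have h2k : ∀ j : ℤ, ζ ^ (2 * j) = Complex.I ^ j := by
    intro j; rw [zpow_mul, h2]
  have hm8 : ζ ^ (8*m) = 1 := by rw [zpow_mul, h8, one_zpow]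
  have hsq : Complex.I ^ (2*k) = (Complex.I ^ k)^2 := by
    rw [two_mul, zpow_add₀ hI, sq]
  have hcube : Complex.I ^ (3*k) = (Complex.I ^ k)^3 := by
    rw [show (3:ℤ)*k = k + (k + k) by ring, zpow_add₀ hI, zpow_add₀ hI]; ring
  have t1 : ζ^(m+3*n) = ζ^(3*m+n) * Complex.I ^ k := by
    rw [show m+3*n = (3*m+n) + 2*k by rw [hk]; ring, zpow_add₀ hζ0, h2k]
  have t2 : ζ^(7*m+5*n) = ζ^(3*m+n) * (Complex.I ^ k)^2 := by
    rw [show 7*m+5*n = (3*m+n) + 2*(2*k) + 8*m by rw [hk]; ring,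
      zpow_add₀ hζ0, zpow_add₀ hζ0, hm8, mul_one, h2k, hsq]
  have t3 : ζ^(5*m+7*n) = ζ^(3*m+n) * (Complex.I ^ k)^3 := by
    rw [show 5*m+7*n = (3*m+n) + 2*(3*k) + 8*m by rw [hk]; ring,
      zpow_add₀ hζ0, zpow_add₀ hζ0, hm8, mul_one, h2k, hcube]
  have factored : ζ^(3*m+n) + ζ^(m+3*n) + ζ^(7*m+5*n) + ζ^(5*m+7*n)
      = ζ^(3*m+n) * ((1 + Complex.I ^ k) * (1 + (Complex.I ^ k)^2)) := by
    rw [t1, t2, t3]; ring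
  rw [factored]
  have i4 : Complex.I ^ (4:ℤ) = 1 := by
    rw [show (4:ℤ) = ((4:ℕ):ℤ) from rfl, zpow_natCast, Complex.I_pow_four]
  have hper : Complex.I ^ k = Complex.I ^ (k % 4) := by
    conv_lhs => rw [← Int.emod_add_mul_ediv k 4]
    rw [zpow_add₀ hI, zpow_mul, i4, one_zpow, mul_one]
  rw [hper, mul_ne_zero_iff, mul_ne_zero_iff]
  have hdvd : (4:ℤ) ∣ k ↔ k % 4 = 0 := Int.dvd_iff_emod_eq_zero
  rw [hdvd]
  have h0 : (0:ℤ) ≤ k % 4 := Int.emod_nonneg k (by norm_num)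
  have h4 : k % 4 < 4 := Int.emod_lt_of_pos k (by norm_num)
  have hzne : ζ ^ (3*m+n) ≠ 0 := zpow_ne_zero _ hζ0
  have i0 : Complex.I ^ (0:ℤ) = 1 := zpow_zero _
  have i1 : Complex.I ^ (1:ℤ) = Complex.I := zpow_one _
  have i2 : Complex.I ^ (2:ℤ) = -1 := by
    rw [show (2:ℤ) = ((2:ℕ):ℤ) from rfl, zpow_natCast, Complex.I_sq]
  have i3 : Complex.I ^ (3:ℤ) = -Complex.I := by
    rw [show (3:ℤ) = ((3:ℕ):ℤ) from rfl, zpow_natCast]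
    simp [pow_succ, Complex.I_sq]
  interval_cases h : (k % 4)
  · rw [i0]; norm_num [hzne]
  · rw [i1]; norm_num [Complex.I_sq]
  · rw [i2]; norm_num
  · rw [i3]; norm_num [neg_sq, Complex.I_sq]
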